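/- arXiv:2105.07989 — 4 statements merged into one kernel-verified Lean document; each statement's English description precedes it below -/
import Mathlib

section
/- Let ν : ℝ^d∖{0} → [0,∞] be radial (ν(x) depends only on |x|) and almost decreasing with constant κ ∈ (0,1], i.e. κ ν(|x|) ≤ ν(|y|) whenever |x| ≥ |y|. Let E ⊂ ℝ^d be measurable with |E| < ∞, let r_E = (|E|/c_d)^{1/d} where c_d = |B(0,1)|. Then for every x ∈ ℝ^d, ∫_{E^c} ν(x−y) dy ≥ κ² ∫_{|h| > r_E} ν(h) dh. -/
open MeasureTheory ENNReal

/-- for a radial almost decreasing kernel (given by its radial profile `ν`),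
`∫_{E^c} ν(x−y) dy ≥ κ² ∫_{|h| > r_E} ν(h) dh`, where `r_E = (|E|/c_d)^{1/d}`. -/
theorem stmt_5 {d : ℕ} (hd : 1 ≤ d) (ν : ℝ → ℝ≥0∞) (hν : Measurable ν)
    (κ : ℝ) (hκ0 : 0 < κ) (hκ1 : κ ≤ 1)
    (hdec : ∀ r₁ r₂ : ℝ, 0 ≤ r₂ → r₂ ≤ r₁ → ENNReal.ofReal κ * ν r₁ ≤ ν r₂)
    (E : Set (EuclideanSpace ℝ (Fin d))) (hE : MeasurableSet E) (hEfin : volume E < ⊤) :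
    ∀ x : EuclideanSpace ℝ (Fin d),
      ENNReal.ofReal (κ ^ 2) *
        ∫⁻ h in {h : EuclideanSpace ℝ (Fin d) |
            ((volume E).toReal /
              (volume (Metric.ball (0 : EuclideanSpace ℝ (Fin d)) 1)).toReal) ^ ((1 : ℝ) / d)
            < ‖h‖}, ν ‖h‖ ≤
      ∫⁻ y in Eᶜ, ν ‖x - y‖ := by
  intro x
  have hdpos : 0 < d := hd
  haveI : NeZero d := ⟨hdpos.ne'⟩
  set c : ℝ≥0∞ := volume (Metric.ball (0 : EuclideanSpace ℝ (Fin d)) 1) with hc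
  set r : ℝ := ((volume E).toReal / c.toReal) ^ ((1 : ℝ) / d) with hrdef
  have hc0 : 0 < c := Metric.measure_ball_pos _ _ one_pos
  have hcT : c < ⊤ := measure_ball_lt_top
  have hr0 : 0 ≤ r := Real.rpow_nonneg (div_nonneg ENNReal.toReal_nonneg ENNReal.toReal_nonneg) _
  set B : Set (EuclideanSpace ℝ (Fin d)) := Metric.ball 0 r with hBdef
  set T : Set (EuclideanSpace ℝ (Fin d)) := {h | r < ‖h‖} with hTdef
  -- volume of B equals volume of E
  have hBvol : volume B = volume E := by
    rw [hBdef, Measure.addHaar_ball _ _ hr0, finrank_euclideanSpace_fin, ← hc]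
    have hrd : r ^ d = (volume E).toReal / c.toReal := by
      rw [hrdef, ← Real.rpow_natCast (((volume E).toReal / c.toReal) ^ ((1 : ℝ) / d)) d,
        ← Real.rpow_mul (div_nonneg ENNReal.toReal_nonneg ENNReal.toReal_nonneg)]
      rw [one_div, inv_mul_cancel₀ (by exact_mod_cast hdpos.ne' : (d : ℝ) ≠ 0), Real.rpow_one]
    rw [hrd, ENNReal.ofReal_div_of_pos (ENNReal.toReal_pos hc0.ne' hcT.ne),
      ENNReal.ofReal_toReal hEfin.ne, ENNReal.ofReal_toReal hcT.ne,
      ENNReal.div_mul_cancel hc0.ne' hcT.ne]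
  -- the substitution h = x - y
  set A : Set (EuclideanSpace ℝ (Fin d)) := (fun h => x - h) ⁻¹' Eᶜ with hAdef
  have hmp : MeasurePreserving (fun h : EuclideanSpace ℝ (Fin d) => x - h) volume volume :=
    Measure.measurePreserving_sub_left volume x
  have hA : MeasurableSet A := hE.compl.preimage (measurable_const.sub measurable_id)
  have hAc : Aᶜ = (fun h => x - h) ⁻¹' E := by
    rw [hAdef, ← Set.preimage_compl, compl_compl]
  have hAcvol : volume Aᶜ = volume E := by
    rw [hAc]; exact hmp.measure_preimage hE.nullMeasurableSet
  have hAcfin : volume Aᶜ < ⊤ := hAcvol ▸ hEfin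
  have hν' : Measurable fun h : EuclideanSpace ℝ (Fin d) => ν ‖h‖ := hν.comp measurable_norm
  have hT : MeasurableSet T := measurableSet_lt measurable_const measurable_norm
  have hBmeas : MeasurableSet B := measurableSet_ball
  -- change of variables
  have key : ∫⁻ y in Eᶜ, ν ‖x - y‖ = ∫⁻ h in A, ν ‖h‖ := by
    rw [← lintegral_indicator hE.compl, ← lintegral_indicator hA]
    rw [← hmp.lintegral_comp (hν'.indicator hA)]
    congr 1
    funext y
    have hmem : (x - y ∈ A) = (y ∈ Eᶜ) := by
      simp [hAdef, Set.mem_preimage, sub_sub_cancel]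
    by_cases hy : y ∈ Eᶜ
    · rw [Set.indicator_of_mem hy, Set.indicator_of_mem (show x - y ∈ A by rw [hmem]; exact hy)]
    · rw [Set.indicator_of_notMem hy,
        Set.indicator_of_notMem (show x - y ∉ A by rw [hmem]; exact hy)]
  rw [key]
  -- notation for integrals
  set f : EuclideanSpace ℝ (Fin d) → ℝ≥0∞ := fun h => ν ‖h‖ with hf
  -- split T
  have hsplit : ∫⁻ h in T, f h = (∫⁻ h in T ∩ A, f h) + ∫⁻ h in T \ A, f h :=
    (lintegral_inter_add_diff f T hA).symm
  -- disjointness of T and B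
  have hTB : Disjoint T B := by
    rw [Set.disjoint_left]
    intro h hhT hhB
    rw [hTdef, Set.mem_setOf_eq] at hhT
    rw [hBdef, Metric.mem_ball, dist_zero_right] at hhB
    exact absurd (hhT.trans hhB) (lt_irrefl r)
  -- measure comparison : μ(Aᶜ ∩ T) ≤ μ(A ∩ B)
  have hmeasle : volume (T \ A) ≤ volume (B ∩ A) := by
    have h1 : volume (T \ A) + volume (B \ A) ≤ volume Aᶜ := by
      rw [← measure_union (hTB.mono Set.diff_subset Set.diff_subset) (hBmeas.diff hA)]
      exact measure_mono (Set.union_subset (Set.diff_subset_iff.mpr (by simp))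
        (Set.diff_subset_iff.mpr (by simp)))
    have h2 : volume Aᶜ = volume (B ∩ A) + volume (B \ A) := by
      rw [hAcvol, ← hBvol, ← measure_inter_add_diff B hA]
    rw [h2] at h1
    have hfin : volume (B \ A) ≠ ⊤ :=
      (lt_of_le_of_lt (measure_mono (Set.diff_subset_iff.mpr (by simp))) hAcfin).ne
    exact ENNReal.le_of_add_le_add_right hfin h1
  -- bound on T \ A
  have hbound1 : ENNReal.ofReal κ * ∫⁻ h in T \ A, f h ≤ ν r * volume (T \ A) := by
    rw [← lintegral_const_mul _ hν']
    calc ∫⁻ h in T \ A, ENNReal.ofReal κ * ν ‖h‖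
        ≤ ∫⁻ _ in T \ A, ν r := by
          apply setLIntegral_mono (measurable_const) fun h hh => ?_
          exact hdec ‖h‖ r hr0 (le_of_lt (hh.1 : r < ‖h‖))
      _ = ν r * volume (T \ A) := by rw [setLIntegral_const]
  -- bound on B ∩ A
  have hbound2 : ENNReal.ofReal κ * (ν r * volume (B ∩ A)) ≤ ∫⁻ h in B ∩ A, f h := by
    calc ENNReal.ofReal κ * (ν r * volume (B ∩ A))
        = ∫⁻ _ in B ∩ A, ENNReal.ofReal κ * ν r := by
          rw [setLIntegral_const, mul_assoc]
      _ ≤ ∫⁻ h in B ∩ A, ν ‖h‖ := by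
          apply setLIntegral_mono hν' fun h hh => ?_
          have : ‖h‖ < r := by
            have := hh.1; rwa [hBdef, Metric.mem_ball, dist_zero_right] at this
          exact hdec r ‖h‖ (norm_nonneg h) this.le
  -- combine
  have hκle1 : ENNReal.ofReal κ ≤ 1 := ENNReal.ofReal_le_one.mpr hκ1
  have hsq : ENNReal.ofReal (κ ^ 2) = ENNReal.ofReal κ * ENNReal.ofReal κ := by
    rw [sq, ENNReal.ofReal_mul hκ0.le]
  calc ENNReal.ofReal (κ ^ 2) * ∫⁻ h in T, f h
      = ENNReal.ofReal κ * ENNReal.ofReal κ * ((∫⁻ h in T ∩ A, f h) + ∫⁻ h in T \ A, f h) := by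
        rw [hsq, hsplit]
    _ ≤ (∫⁻ h in T ∩ A, f h) + ENNReal.ofReal κ * (ENNReal.ofReal κ * ∫⁻ h in T \ A, f h) := by
        rw [mul_add]
        refine add_le_add ?_ (le_of_eq (mul_assoc _ _ _))
        have h11 : ENNReal.ofReal κ * ENNReal.ofReal κ ≤ 1 :=
          le_trans (mul_le_mul' hκle1 hκle1) (le_of_eq (one_mul 1))
        exact le_trans (mul_le_mul_left h11 _) (le_of_eq (one_mul _))
    _ ≤ (∫⁻ h in T ∩ A, f h) + ENNReal.ofReal κ * (ν r * volume (T \ A)) := by gcongr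
    _ ≤ (∫⁻ h in T ∩ A, f h) + ENNReal.ofReal κ * (ν r * volume (B ∩ A)) := by gcongr
    _ ≤ (∫⁻ h in T ∩ A, f h) + ∫⁻ h in B ∩ A, f h := by gcongr
    _ = ∫⁻ h in (T ∩ A) ∪ (B ∩ A), f h := by
        rw [lintegral_union (hBmeas.inter hA)
          (hTB.mono Set.inter_subset_left Set.inter_subset_left)]
    _ ≤ ∫⁻ h in A, f h := by
        apply lintegral_mono_set
        exact Set.union_subset (Set.inter_subset_right) (Set.inter_subset_right)
end

section
/- Let ν : ℝ^d∖{0} → [0,∞] be measurable with symmetric decreasing rearrangement ν*. For any measurable E ⊂ ℝ^d with |E| < ∞, set r_E = (|E|/c_d)^{1/d}. Then for every x ∈ ℝ^d, ∫_{E^c} ν(x−y) dy ≥ ∫_{{h : ν(h) < ν*(r_E)}} ν(h) dh. -/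
/-!
Translating by `x` turns `Eᶜ` into a set `B` whose complement has measure `|E| = c_d r_E^d`.
Below every level `0 < a < ν*(r_E)` the superlevel set `{a < ν}` is larger than `|E|`, so
`B` contains at least as much of `{a < ν}` as the sublevel set `{ν ≤ a}` has outside `B`;
trading the latter for the former can only increase the integral of `ν` (bathtub principle).
Letting `a` increase to `ν*(r_E)` gives the claim.
-/

open MeasureTheory ENNReal

/-- The symmetric decreasing rearrangement (radial profile) of a kernel `ν` on `ℝ^d`:
`ν*(r) = inf{s > 0 : |{ν > s}| ≤ c_d r^d}` where `c_d` is the volume of the unit ball. -/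
noncomputable def symmRearr {d : ℕ} (ν : EuclideanSpace ℝ (Fin d) → ℝ≥0∞) (r : ℝ) : ℝ≥0∞ :=
  sInf {s : ℝ≥0∞ | 0 < s ∧
    volume {h : EuclideanSpace ℝ (Fin d) | s < ν h} ≤
      volume (Metric.ball (0 : EuclideanSpace ℝ (Fin d)) 1) * ENNReal.ofReal (r ^ d)}

open Set

section Bathtub

variable {α : Type*} [MeasurableSpace α] {μ : Measure α}

theorem measure_sdiff_le_measure_sdiff_of_le {s t : Set α} (ht : MeasurableSet t)
    (hs : μ s ≠ ∞) (hst : μ s ≤ μ t) : μ (s \ t) ≤ μ (t \ s) := by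
  have hfin : μ (s ∩ t) ≠ ∞ := measure_ne_top_of_subset inter_subset_left hs
  refine (ENNReal.add_le_add_iff_left hfin).mp ?_
  calc μ (s ∩ t) + μ (s \ t) = μ s := measure_inter_add_sdiff s ht
    _ ≤ μ t := hst
    _ ≤ μ (t ∩ s) + μ (t \ s) := by
        conv_lhs => rw [← inter_union_sdiff t s]
        exact measure_union_le _ _
    _ = μ (s ∩ t) + μ (t \ s) := by rw [inter_comm]

theorem setLIntegral_setOf_le_le_setLIntegral {f : α → ℝ≥0∞} (hf : Measurable f) {B : Set α}
    (hB : MeasurableSet B) {a : ℝ≥0∞} (hBc : μ Bᶜ ≤ μ {x | a < f x}) (hBc_fin : μ Bᶜ ≠ ∞) :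
    ∫⁻ x in {x | f x ≤ a}, f x ∂μ ≤ ∫⁻ x in B, f x ∂μ := by
  set A := {x | f x ≤ a}
  have hA : MeasurableSet A := hf measurableSet_Iic
  have hvol : μ (A \ B) ≤ μ (B \ A) :=
    calc μ (A \ B) ≤ μ (Bᶜ \ {x | a < f x}) :=
          measure_mono fun x hx => ⟨hx.2, show ¬a < f x from not_lt.mpr hx.1⟩
      _ ≤ μ ({x | a < f x} \ Bᶜ) :=
          measure_sdiff_le_measure_sdiff_of_le (hf measurableSet_Ioi) hBc_fin hBc
      _ ≤ μ (B \ A) := measure_mono fun x ⟨hxa, hxB⟩ =>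
          ⟨not_not.mp hxB, show ¬f x ≤ a from not_le.mpr hxa⟩
  calc ∫⁻ x in A, f x ∂μ = ∫⁻ x in B ∩ A, f x ∂μ + ∫⁻ x in A \ B, f x ∂μ := by
        rw [inter_comm, lintegral_inter_add_sdiff _ _ hB]
    _ ≤ ∫⁻ x in B ∩ A, f x ∂μ + a * μ (A \ B) := by
        gcongr
        calc ∫⁻ x in A \ B, f x ∂μ ≤ ∫⁻ _ in A \ B, a ∂μ :=
              setLIntegral_mono' (hA.diff hB) fun x hx => hx.1
          _ = a * μ (A \ B) := setLIntegral_const _ _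
    _ ≤ ∫⁻ x in B ∩ A, f x ∂μ + a * μ (B \ A) := by gcongr
    _ ≤ ∫⁻ x in B ∩ A, f x ∂μ + ∫⁻ x in B \ A, f x ∂μ := by
        gcongr
        calc a * μ (B \ A) = ∫⁻ _ in B \ A, a ∂μ := (setLIntegral_const _ _).symm
          _ ≤ ∫⁻ x in B \ A, f x ∂μ := setLIntegral_mono hf fun x hx => (not_le.mp hx.2).le
    _ = ∫⁻ x in B, f x ∂μ := lintegral_inter_add_sdiff _ _ hA

theorem setLIntegral_setOf_lt_le_of_forall_lt {f : α → ℝ≥0∞} {t I : ℝ≥0∞}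
    (h : ∀ a, 0 < a → a < t → ∫⁻ x in {x | f x ≤ a}, f x ∂μ ≤ I) :
    ∫⁻ x in {x | f x < t}, f x ∂μ ≤ I := by
  rcases eq_zero_or_pos t with rfl | ht
  · simp
  obtain ⟨u, hu_mono, hu_mem, hu_tendsto⟩ := exists_seq_strictMono_tendsto' ht
  have hunion : {x | f x < t} = ⋃ n, {x | f x ≤ u n} := by
    ext x
    simp only [mem_ofPred_eq, mem_iUnion]
    refine ⟨fun hx => ?_, fun ⟨n, hn⟩ => hn.trans_lt (hu_mem n).2⟩
    obtain ⟨n, hn⟩ := (hu_tendsto.eventually_const_lt hx).exists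
    exact ⟨n, hn.le⟩
  have hdir : Directed (· ⊆ ·) fun n => {x | f x ≤ u n} :=
    Monotone.directed_le fun m n hmn x hx => hx.trans (hu_mono.monotone hmn)
  rw [hunion, setLIntegral_iUnion_of_directed _ hdir]
  exact iSup_le fun n => h (u n) (hu_mem n).1 (hu_mem n).2

end Bathtub

theorem setLIntegral_comp_sub_left {G : Type*} [MeasurableSpace G] [AddCommGroup G]
    [MeasurableAdd G] [MeasurableNeg G] {μ : Measure G} [μ.IsNegInvariant]
    [μ.IsAddLeftInvariant] (f : G → ℝ≥0∞) (x : G) (s : Set G) :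
    ∫⁻ y in s, f (x - y) ∂μ = ∫⁻ y in (x - ·) ⁻¹' s, f y ∂μ := by
  simpa only [_root_.sub_sub_cancel] using
    ((Measure.measurePreserving_sub_left μ x).setLIntegral_comp_preimage_emb
      (MeasurableEquiv.subLeft x).measurableEmbedding (fun y => f (x - y)) s).symm

theorem mul_ofReal_rpow_one_div_pow {c m : ℝ≥0∞} (hc0 : c ≠ 0) (hc : c ≠ ∞) (hm : m ≠ ∞)
    {d : ℕ} (hd : d ≠ 0) :
    c * ENNReal.ofReal (((m.toReal / c.toReal) ^ ((1 : ℝ) / d)) ^ d) = m := by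
  rw [← Real.rpow_natCast, ← Real.rpow_mul (by positivity), one_div,
    inv_mul_cancel₀ (Nat.cast_ne_zero.mpr hd), Real.rpow_one,
    ENNReal.ofReal_div_of_pos (ENNReal.toReal_pos hc0 hc), ENNReal.ofReal_toReal hm,
    ENNReal.ofReal_toReal hc]
  exact ENNReal.mul_div_cancel hc0 hc

theorem ball_volume_mul_lt_of_lt_symmRearr {d : ℕ} {ν : EuclideanSpace ℝ (Fin d) → ℝ≥0∞}
    {r : ℝ} {a : ℝ≥0∞} (ha : 0 < a) (har : a < symmRearr ν r) :
    volume (Metric.ball (0 : EuclideanSpace ℝ (Fin d)) 1) * ENNReal.ofReal (r ^ d) <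
      volume {h | a < ν h} :=
  not_le.mp fun hle => (sInf_le ⟨ha, hle⟩ : symmRearr ν r ≤ a).not_gt har

/-- for any measurable kernel `ν` and any measurable set `E` of finite measure,
`∫_{E^c} ν(x−y) dy ≥ ∫_{{ν < ν*(r_E)}} ν(h) dh` with `r_E = (|E|/c_d)^{1/d}`. -/
theorem stmt_6 {d : ℕ} (hd : 1 ≤ d) (ν : EuclideanSpace ℝ (Fin d) → ℝ≥0∞) (hν : Measurable ν)
    (E : Set (EuclideanSpace ℝ (Fin d))) (hE : MeasurableSet E) (hEfin : volume E < ⊤) :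
    ∀ x : EuclideanSpace ℝ (Fin d),
      ∫⁻ h in {h : EuclideanSpace ℝ (Fin d) |
          ν h < symmRearr ν
            (((volume E).toReal /
              (volume (Metric.ball (0 : EuclideanSpace ℝ (Fin d)) 1)).toReal) ^ ((1 : ℝ) / d))},
        ν h ≤
      ∫⁻ y in Eᶜ, ν (x - y) := by
  intro x
  have hBc : volume ((x - ·) ⁻¹' Eᶜ)ᶜ = volume E := by
    rw [preimage_compl, compl_compl]
    exact (Measure.measurePreserving_sub_left volume x).measure_preimage hE.nullMeasurableSet
  rw [setLIntegral_comp_sub_left]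
  refine setLIntegral_setOf_lt_le_of_forall_lt fun a ha har => ?_
  refine setLIntegral_setOf_le_le_setLIntegral hν (measurable_const_sub x hE.compl) ?_
    (hBc ▸ hEfin.ne)
  rw [hBc]
  exact (mul_ofReal_rpow_one_div_pow (Metric.measure_ball_pos volume 0 one_pos).ne'
    measure_ball_lt_top.ne hEfin.ne (by omega)).symm.trans_le
      (ball_volume_mul_lt_of_lt_symmRearr ha har).le
end

section
/- For s ∈ (0,1), p ≥ 1 with 1/p*_s := 1/p − s/d > 0, the fractional Gagliardo–Nirenberg–Sobolev inequality holds: for all u ∈ L^{p*_s}(ℝ^d), ‖u‖_{L^{p*_s}(ℝ^d)} ≤ 2^{p*_s/p} |B(0,1)|^{−1/p − s/d} (∬_{ℝ^d×ℝ^d} |u(x)−u(y)|^p / |x−y|^{d+sp} dx dy)^{1/p}. -/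
/-!
Fix `x` and a ball `B = B(x, r)` of volume `t`. Averaging
`|u x|^p ≤ 2^(p-1) (|u x - u y|^p + |u y|^p)` over `y ∈ B`, the first average is at most
`r^(d+sp) / t · F x` with `F x = ∫ |u x - u y|^p / |x - y|^(d+sp) dy`, and the second is at most
`(‖u‖_{p*}^{p*} / t)^θ` by Hölder, where `θ = p / p*`. As `r^d` is proportional to `t` and
`sp = d (1 - θ)`, this bounds `|u x|^p` by `a t^(1-θ) + b t^(-θ)` for every `t > 0`; balancing the
two terms gives `|u x|^{p*} ≤ C ‖u‖_{p*}^{p*(1-θ)} F x`. Integrating in `x` and absorbing the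
finite factor `‖u‖_{p*}^{p*(1-θ)}` into the left-hand side gives the inequality.
-/

open MeasureTheory ENNReal Metric

open Filter Topology in
theorem le_two_mul_mul_rpow_mul_rpow_of_forall_le {m a b c θ : ℝ} (ha : 0 ≤ a) (hb : 0 < b)
    (hθ : 0 < θ) (h : ∀ t : ℝ, 0 < t → m ≤ c * (a * t ^ (1 - θ) + b * t ^ (-θ))) :
    m ≤ 2 * c * a ^ θ * b ^ (1 - θ) := by
  rcases ha.eq_or_lt with rfl | ha
  · have hlim : Tendsto (fun t : ℝ => c * (0 * t ^ (1 - θ) + b * t ^ (-θ))) atTop (𝓝 0) := by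
      simpa using ((tendsto_rpow_neg_atTop hθ).const_mul b).const_mul c
    rw [Real.zero_rpow hθ.ne', mul_zero, zero_mul]
    exact ge_of_tendsto hlim ((eventually_gt_atTop 0).mono h)
  · have hbalance : a * (b / a) ^ (1 - θ) = a ^ θ * b ^ (1 - θ) ∧
        b * (b / a) ^ (-θ) = a ^ θ * b ^ (1 - θ) := by
      rw [Real.div_rpow hb.le ha.le, Real.div_rpow hb.le ha.le, Real.rpow_sub ha,
        Real.rpow_sub hb, Real.rpow_neg ha.le, Real.rpow_neg hb.le, Real.rpow_one, Real.rpow_one]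
      constructor <;> field_simp
    have key := h (b / a) (div_pos hb ha)
    rw [hbalance.1, hbalance.2] at key
    linarith

namespace ENNReal

theorem le_two_mul_mul_rpow_mul_rpow_of_forall_le {m a b c : ℝ≥0∞} {θ : ℝ} (hb0 : b ≠ 0)
    (hb : b ≠ ∞) (hc0 : c ≠ 0) (hc : c ≠ ∞) (hθ : 0 < θ)
    (h : ∀ t : ℝ≥0∞, t ≠ 0 → t ≠ ∞ → m ≤ c * (a * t ^ (1 - θ) + b * t ^ (-θ))) :
    m ≤ 2 * c * a ^ θ * b ^ (1 - θ) := by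
  rcases eq_or_ne a ∞ with rfl | ha
  · have : b ^ (1 - θ) ≠ 0 := by simp [ENNReal.rpow_eq_zero_iff, hb0, hb]
    simp [top_rpow_of_pos hθ, hc0, this]
  have hm : m ≠ ∞ := ne_top_of_le_ne_top (by simpa using mul_ne_top hc (add_ne_top.2 ⟨ha, hb⟩))
    (h 1 one_ne_zero one_ne_top)
  have hreal := _root_.le_two_mul_mul_rpow_mul_rpow_of_forall_le (m := m.toReal) (a := a.toReal)
    (c := c.toReal) toReal_nonneg (toReal_pos hb0 hb) hθ fun t ht => by
      have ht0 : ENNReal.ofReal t ≠ 0 := by simpa using ht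
      have := ENNReal.toReal_mono (by finiteness) (h _ ht0 ofReal_ne_top)
      rwa [toReal_mul, toReal_add (by finiteness) (by finiteness), toReal_mul, toReal_mul,
        ← toReal_rpow, ← toReal_rpow, toReal_ofReal ht.le] at this
  rw [← ofReal_toReal hm]
  refine (ofReal_le_ofReal hreal).trans_eq ?_
  rw [ofReal_mul (by positivity), ofReal_mul (by positivity), ofReal_mul (by positivity),
    ← ofReal_rpow_of_nonneg toReal_nonneg hθ.le, ← ofReal_rpow_of_pos (toReal_pos hb0 hb),
    ofReal_ofNat, ofReal_toReal hc, ofReal_toReal ha, ofReal_toReal hb]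

theorem rpow_le_of_le_mul_rpow_one_sub {a b : ℝ≥0∞} {θ : ℝ} (ha0 : a ≠ 0) (ha : a ≠ ∞)
    (h : a ≤ b * a ^ (1 - θ)) : a ^ θ ≤ b := by
  rwa [← ENNReal.mul_le_mul_iff_left (rpow_pos (pos_iff_ne_zero.2 ha0) ha).ne'
    (rpow_ne_top_of_ne_zero ha0 ha), ← rpow_add _ _ ha0 ha, add_sub_cancel, rpow_one]

end ENNReal

section SetIntegral

variable {X F : Type*} [MeasurableSpace X] {μ : Measure X} [NormedAddCommGroup F] {u : X → F}

theorem enorm_rpow_mul_measure_le_setLIntegral (hu : AEStronglyMeasurable u μ) (s : Set X)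
    {p : ℝ} (hp : 1 ≤ p) (c : F) :
    ‖c‖ₑ ^ p * μ s ≤
      2 ^ (p - 1) * (∫⁻ y in s, ‖c - u y‖ₑ ^ p ∂μ + ∫⁻ y in s, ‖u y‖ₑ ^ p ∂μ) := by
  have hpoint (y : X) : ‖c‖ₑ ^ p ≤ 2 ^ (p - 1) * (‖c - u y‖ₑ ^ p + ‖u y‖ₑ ^ p) := by
    refine (rpow_le_rpow ?_ (by linarith)).trans (rpow_add_le_mul_rpow_add_rpow _ _ hp)
    simpa using enorm_add_le (c - u y) (u y)
  calc ‖c‖ₑ ^ p * μ s = ∫⁻ _ in s, ‖c‖ₑ ^ p ∂μ := (setLIntegral_const _ _).symm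
    _ ≤ ∫⁻ y in s, 2 ^ (p - 1) * (‖c - u y‖ₑ ^ p + ‖u y‖ₑ ^ p) ∂μ := lintegral_mono hpoint
    _ = _ := by
      rw [lintegral_const_mul' _ _ (by finiteness),
        lintegral_add_right' _ (hu.enorm.pow_const p).restrict]

theorem setLIntegral_enorm_rpow_le (hu : AEStronglyMeasurable u μ) (s : Set X) {p q : ℝ}
    (hp : 0 < p) (hpq : p ≤ q) :
    ∫⁻ y in s, ‖u y‖ₑ ^ p ∂μ ≤ (∫⁻ y, ‖u y‖ₑ ^ q ∂μ) ^ (p / q) * μ s ^ (1 - p / q) := by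
  have hq : 0 < q := hp.trans_le hpq
  have holder := eLpNorm'_le_eLpNorm'_mul_rpow_measure_univ hp hpq hu.restrict (μ := μ.restrict s)
  rw [eLpNorm'_eq_lintegral_enorm, eLpNorm'_eq_lintegral_enorm, Measure.restrict_apply_univ,
    ← ENNReal.rpow_le_rpow_iff hp, ← ENNReal.rpow_mul, one_div_mul_cancel hp.ne', rpow_one,
    mul_rpow_of_nonneg _ _ hp.le, ← ENNReal.rpow_mul, ← ENNReal.rpow_mul] at holder
  rw [show 1 / q * p = p / q by ring, show (1 / p - 1 / q) * p = 1 - p / q by field_simp] at holder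
  exact holder.trans
    (mul_le_mul_left (rpow_le_rpow (setLIntegral_le_lintegral _ _) (by positivity)) _)

end SetIntegral

section Ball

variable {E : Type*} [NormedAddCommGroup E] [MeasurableSpace E] [OpensMeasurableSpace E]
  {μ : Measure E} {u : E → ℝ}

theorem setLIntegral_ball_enorm_sub_rpow_le (x : E) (r : ℝ) {p D : ℝ} (hp : 0 < p)
    (hD : 0 ≤ D) :
    ∫⁻ y in ball x r, ‖u x - u y‖ₑ ^ p ∂μ ≤
      ENNReal.ofReal (r ^ D) * ∫⁻ y, ENNReal.ofReal (|u x - u y| ^ p / ‖x - y‖ ^ D) ∂μ := by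
  have hpoint (y : E) (hy : y ∈ ball x r) : ‖u x - u y‖ₑ ^ p ≤
      ENNReal.ofReal (r ^ D) * ENNReal.ofReal (|u x - u y| ^ p / ‖x - y‖ ^ D) := by
    have hr : 0 < r := pos_of_mem_ball hy
    rw [Real.enorm_eq_ofReal_abs, ofReal_rpow_of_nonneg (abs_nonneg _) hp.le,
      ← ofReal_mul (by positivity)]
    refine ofReal_le_ofReal ?_
    rcases eq_or_ne y x with rfl | hyx
    · simp [Real.zero_rpow hp.ne']
    have hxy : 0 < ‖x - y‖ := norm_pos_iff.2 (sub_ne_zero.2 hyx.symm)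
    rw [mul_div_assoc', le_div_iff₀ (by positivity), mul_comm]
    gcongr
    simpa [dist_eq_norm, norm_sub_rev] using (mem_ball.1 hy).le
  calc ∫⁻ y in ball x r, ‖u x - u y‖ₑ ^ p ∂μ
      ≤ ∫⁻ y in ball x r, ENNReal.ofReal (r ^ D) *
          ENNReal.ofReal (|u x - u y| ^ p / ‖x - y‖ ^ D) ∂μ :=
        setLIntegral_mono' measurableSet_ball hpoint
    _ ≤ _ := by
      rw [lintegral_const_mul' _ _ ofReal_ne_top]
      exact mul_le_mul_right (setLIntegral_le_lintegral _ _) _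

theorem enorm_rpow_mul_measure_ball_le (hu : AEStronglyMeasurable u μ) (x : E) (r : ℝ)
    {p q D : ℝ} (hp : 1 ≤ p) (hpq : p ≤ q) (hD : 0 ≤ D) :
    ‖u x‖ₑ ^ p * μ (ball x r) ≤ 2 ^ (p - 1) *
      (ENNReal.ofReal (r ^ D) * ∫⁻ y, ENNReal.ofReal (|u x - u y| ^ p / ‖x - y‖ ^ D) ∂μ +
        (∫⁻ y, ‖u y‖ₑ ^ q ∂μ) ^ (p / q) * μ (ball x r) ^ (1 - p / q)) := by
  refine (enorm_rpow_mul_measure_le_setLIntegral hu _ hp _).trans ?_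
  gcongr
  · exact setLIntegral_ball_enorm_sub_rpow_le x r (by linarith) hD
  · exact setLIntegral_enorm_rpow_le hu _ (by linarith) hpq

end Ball

section AddHaar

variable {E : Type*} [NormedAddCommGroup E] [NormedSpace ℝ E] [FiniteDimensional ℝ E]
  [MeasurableSpace E] [BorelSpace E] [Nontrivial E]

theorem MeasureTheory.Measure.exists_addHaar_ball_eq (μ : Measure E) [μ.IsAddHaarMeasure] (x : E)
    {t : ℝ≥0∞} (ht0 : t ≠ 0) (ht : t ≠ ∞) {D : ℝ} (hD : 0 ≤ D) : ∃ r : ℝ, μ (ball x r) = t ∧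
      ENNReal.ofReal (r ^ D) = (t / μ (ball 0 1)) ^ (D / Module.finrank ℝ E) := by
  have hd : Module.finrank ℝ E ≠ 0 := Module.finrank_pos.ne'
  have hB0 : μ (ball 0 1) ≠ 0 := (measure_ball_pos μ _ one_pos).ne'
  have hB : μ (ball 0 1) ≠ ∞ := measure_ball_lt_top.ne
  have htB : t / μ (ball 0 1) ≠ ∞ := div_ne_top ht hB0
  set ρ := (t / μ (ball 0 1)).toReal
  have hρ : 0 < ρ := toReal_pos (by simp [ht0, hB]) htB
  refine ⟨ρ ^ ((Module.finrank ℝ E : ℝ)⁻¹), ?_, ?_⟩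
  · rw [Measure.addHaar_ball_of_pos μ _ (by positivity), Real.rpow_inv_natCast_pow hρ.le hd,
      ofReal_toReal htB, ENNReal.div_mul_cancel hB0 hB]
  · rw [← Real.rpow_mul hρ.le, ← ofReal_rpow_of_nonneg hρ.le (by positivity),
      ofReal_toReal htB, inv_mul_eq_div]

variable {μ : Measure E} [μ.IsAddHaarMeasure] {u : E → ℝ} {p q s : ℝ}

theorem enorm_rpow_le_mul_rpow_add_mul_rpow_neg (hu : AEStronglyMeasurable u μ) (x : E)
    (hp : 1 ≤ p) (hpq : p ≤ q) (hsp : s * p = Module.finrank ℝ E * (1 - p / q)) {t : ℝ≥0∞}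
    (ht0 : t ≠ 0) (ht : t ≠ ∞) :
    ‖u x‖ₑ ^ p ≤ 2 ^ (p - 1) *
      (μ (ball 0 1) ^ (p / q - 2) *
          (∫⁻ y, ENNReal.ofReal (|u x - u y| ^ p / ‖x - y‖ ^ (Module.finrank ℝ E + s * p)) ∂μ) *
          t ^ (1 - p / q) +
        (∫⁻ y, ‖u y‖ₑ ^ q ∂μ) ^ (p / q) * t ^ (-(p / q))) := by
  have hd : (0 : ℝ) < Module.finrank ℝ E := mod_cast Module.finrank_pos
  have hθ : p / q ≤ 1 := div_le_one_of_le₀ hpq (by linarith)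
  have hD : 0 ≤ (Module.finrank ℝ E : ℝ) + s * p := by rw [hsp]; nlinarith
  obtain ⟨r, hvol, hrD⟩ := μ.exists_addHaar_ball_eq x ht0 ht hD
  have hball := enorm_rpow_mul_measure_ball_le hu x r hp hpq hD
  rw [hvol, hrD, show ((Module.finrank ℝ E : ℝ) + s * p) / Module.finrank ℝ E = 2 - p / q by
    rw [hsp]; field_simp; ring] at hball
  have hsucc (y : ℝ) : t ^ (y + 1) = t ^ y * t := by rw [rpow_add y 1 ht0 ht, rpow_one]
  rw [← ENNReal.mul_le_mul_iff_left ht0 ht]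
  refine hball.trans_eq ?_
  rw [div_eq_mul_inv, mul_rpow_of_nonneg _ _ (by linarith), inv_rpow, ← rpow_neg, neg_sub,
    show 2 - p / q = (1 - p / q) + 1 by ring, hsucc, show 1 - p / q = -(p / q) + 1 by ring, hsucc]
  ring

theorem enorm_rpow_le_mul_lintegral (hu : AEStronglyMeasurable u μ) (x : E) (hp : 1 ≤ p)
    (hpq : p ≤ q) (hsp : s * p = Module.finrank ℝ E * (1 - p / q))
    (hL0 : ∫⁻ y, ‖u y‖ₑ ^ q ∂μ ≠ 0) (hL : ∫⁻ y, ‖u y‖ₑ ^ q ∂μ ≠ ∞) :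
    ‖u x‖ₑ ^ q ≤ 2 ^ q * μ (ball 0 1) ^ (p / q - 2) * (∫⁻ y, ‖u y‖ₑ ^ q ∂μ) ^ (1 - p / q) *
      ∫⁻ y, ENNReal.ofReal (|u x - u y| ^ p / ‖x - y‖ ^ (Module.finrank ℝ E + s * p)) ∂μ := by
  have hq : 0 < q := by linarith
  have hθ : 0 < p / q := by positivity
  have hopt := ENNReal.le_two_mul_mul_rpow_mul_rpow_of_forall_le
    (rpow_pos (pos_iff_ne_zero.2 hL0) hL).ne' (rpow_ne_top_of_ne_zero hL0 hL)
    (by positivity) (by finiteness) hθ fun t ht0 ht =>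
      enorm_rpow_le_mul_rpow_add_mul_rpow_neg hu x hp hpq hsp ht0 ht
  have htwo : (2 : ℝ≥0∞) ^ (1 + (p - 1)) = 2 * 2 ^ (p - 1) := by
    rw [rpow_add _ _ two_ne_zero ofNat_ne_top, rpow_one]
  rw [← htwo, add_sub_cancel] at hopt
  have hqθ : q * (p / q) = p := by field_simp
  rw [← rpow_le_rpow_iff hθ, ← rpow_mul, hqθ]
  refine hopt.trans_eq ?_
  simp only [mul_rpow_of_nonneg _ _ hθ.le, ← rpow_mul, hqθ]
  ring_nf

theorem eLpNorm_le_fractional_gagliardo (hp : 1 ≤ p) (hpq : p ≤ q)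
    (hsp : s * p = Module.finrank ℝ E * (1 - p / q)) (hu : MemLp u (ENNReal.ofReal q) μ) :
    eLpNorm u (ENNReal.ofReal q) μ ≤ (2 ^ q * μ (ball 0 1) ^ (p / q - 2)) ^ (1 / p) *
      (∫⁻ x, ∫⁻ y, ENNReal.ofReal (|u x - u y| ^ p / ‖x - y‖ ^ (Module.finrank ℝ E + s * p)) ∂μ
        ∂μ) ^ (1 / p) := by
  have hq : 0 < q := by linarith
  set L := ∫⁻ y, ‖u y‖ₑ ^ q ∂μ
  have hnorm : eLpNorm u (ENNReal.ofReal q) μ = L ^ (1 / q) := by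
    rw [eLpNorm_eq_lintegral_rpow_enorm_toReal (by simpa using hq) ofReal_ne_top,
      toReal_ofReal hq.le]
  have hL : L ≠ ∞ := by
    have := hu.eLpNorm_lt_top
    rw [hnorm, rpow_lt_top_iff_of_pos (by positivity)] at this
    exact this.ne
  rcases eq_or_ne L 0 with hL0 | hL0
  · simp [hnorm, hL0, hq]
  set K := 2 ^ q * μ (ball 0 1) ^ (p / q - 2)
  have hB0 : μ (ball 0 1) ≠ 0 := (measure_ball_pos μ _ one_pos).ne'
  have hint : L ≤ K * (∫⁻ x, ∫⁻ y, ENNReal.ofReal (|u x - u y| ^ p /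
      ‖x - y‖ ^ (Module.finrank ℝ E + s * p)) ∂μ ∂μ) * L ^ (1 - p / q) := by
    calc L ≤ ∫⁻ x, K * L ^ (1 - p / q) * ∫⁻ y, ENNReal.ofReal (|u x - u y| ^ p /
          ‖x - y‖ ^ (Module.finrank ℝ E + s * p)) ∂μ ∂μ :=
          lintegral_mono fun x => enorm_rpow_le_mul_lintegral hu.1 x hp hpq hsp hL0 hL
      _ = _ := by
        rw [lintegral_const_mul' _ _ (by finiteness)]
        ring
  calc eLpNorm u (ENNReal.ofReal q) μ = (L ^ (p / q)) ^ (1 / p) := by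
        rw [hnorm, ← rpow_mul]; field_simp
    _ ≤ _ := rpow_le_rpow (rpow_le_of_le_mul_rpow_one_sub hL0 hL hint) (by positivity)
    _ = _ := mul_rpow_of_nonneg _ _ (by positivity)

end AddHaar

/-- the fractional Gagliardo–Nirenberg–Sobolev inequality: for `s ∈ (0,1)`,
`p ≥ 1` with `1/p*_s = 1/p − s/d > 0`, and `u ∈ L^{p*_s}(ℝ^d)`,
`‖u‖_{L^{p*_s}} ≤ 2^{p*_s/p} |B(0,1)|^{−1/p−s/d} (∬ |u(x)−u(y)|^p/|x−y|^{d+sp} dx dy)^{1/p}`. -/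
theorem stmt_13 {d : ℕ} (hd : 1 ≤ d) (s p ps : ℝ) (hs : s ∈ Set.Ioo (0 : ℝ) 1) (hp : 1 ≤ p)
    (hcrit : 0 < 1 / p - s / d) (hps : 1 / ps = 1 / p - s / d)
    (u : EuclideanSpace ℝ (Fin d) → ℝ) (hu : MemLp u (ENNReal.ofReal ps) volume) :
    eLpNorm u (ENNReal.ofReal ps) volume ≤
      ENNReal.ofReal (2 ^ (ps / p) *
          (volume (Metric.ball (0 : EuclideanSpace ℝ (Fin d)) 1)).toReal ^ (-1 / p - s / d)) *
        (∫⁻ x, ∫⁻ y,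
            ENNReal.ofReal (|u x - u y| ^ p / ‖x - y‖ ^ ((d : ℝ) + s * p))) ^ (1 / p) := by
  have hp0 : 0 < p := by linarith
  have hps0 : 0 < ps := one_div_pos.1 (hps ▸ hcrit)
  have hsd : 0 ≤ s / d := div_nonneg hs.1.le d.cast_nonneg
  have hpq : p ≤ ps := by
    rw [← one_div_le_one_div hps0 hp0]; linarith
  have hsp : s * p = d * (1 - p / ps) := by
    rw [div_eq_mul_one_div p ps, hps]; field_simp; ring
  have : Nontrivial (EuclideanSpace ℝ (Fin d)) :=
    Module.nontrivial_of_finrank_pos (R := ℝ) (by rw [finrank_euclideanSpace_fin]; omega)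
  have key := eLpNorm_le_fractional_gagliardo (μ := volume) hp hpq
    (by rwa [finrank_euclideanSpace_fin]) hu
  rw [finrank_euclideanSpace_fin] at key
  refine key.trans_eq (congrArg (· * _) ?_)
  have hB0 : volume (ball (0 : EuclideanSpace ℝ (Fin d)) 1) ≠ 0 :=
    (measure_ball_pos _ _ one_pos).ne'
  rw [ofReal_mul (by positivity), ← ofReal_rpow_of_pos two_pos, ofReal_ofNat,
    ← ofReal_rpow_of_pos (toReal_pos hB0 measure_ball_lt_top.ne),
    ofReal_toReal measure_ball_lt_top.ne, mul_rpow_of_nonneg _ _ (by positivity), ← rpow_mul,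
    ← rpow_mul]
  congr 2
  · ring
  · rw [show (p / ps - 2) * (1 / p) = 1 / ps - 2 / p by field_simp, hps]
    ring
end

section
/- Let s ∈ (0,1), p ≥ 1 with sp < d, and γ_s = d·c_d^{1+sp/d}/(sp) where c_d = |B(0,1)|. For every measurable set E ⊂ ℝ^d with |E| < ∞ and every x ∈ ℝ^d, ∫_{E^c} |x−y|^{−d−sp} dy ≥ γ_s |E|^{−sp/d}. -/
/-!
Among measurable sets of a given finite measure, the complement integral of the kernel
`y ↦ ‖x - y‖ ^ (-q)` is smallest for the ball `B` centred at `x`: the kernel is at least its value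
on `∂B` inside `B` and at most that value outside, while `E \ B` and `B \ E` have equal measure.
For the ball, polar coordinates give `∫_{‖z‖ ≥ r} ‖z‖ ^ (-q) = d c_d r ^ (d - q) / (q - d)`, and with
`c_d r ^ d = |E|` and `q = d + s p` this is `γ_s |E| ^ (-s p / d)`.
-/

open MeasureTheory ENNReal Metric Set

section Rearrangement

variable {α : Type*} [MeasurableSpace α] {μ : Measure α}

theorem setLIntegral_compl_le_of_measure_eq {s t : Set α} (hs : MeasurableSet s)
    (ht : MeasurableSet t) (hst : μ s = μ t) (ht_fin : μ t ≠ ∞) {k : α → ℝ≥0∞} {c : ℝ≥0∞}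
    (hk_in : ∀ᵐ y ∂μ.restrict t, c ≤ k y) (hk_out : ∀ y ∉ t, k y ≤ c) :
    ∫⁻ y in tᶜ, k y ∂μ ≤ ∫⁻ y in sᶜ, k y ∂μ := by
  have hμ : μ (s \ t) = μ (t \ s) := measure_sdiff_symm hs.nullMeasurableSet
    ht.nullMeasurableSet hst (measure_ne_top_of_subset inter_subset_right ht_fin)
  have h_out : ∫⁻ y in s \ t, k y ∂μ ≤ c * μ (s \ t) := by
    rw [← setLIntegral_const]
    exact setLIntegral_mono_ae (by fun_prop) (ae_of_all _ fun y hy => hk_out y hy.2)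
  have h_in : c * μ (t \ s) ≤ ∫⁻ y in t \ s, k y ∂μ := by
    rw [← setLIntegral_const]
    exact lintegral_mono_ae (ae_restrict_of_ae_restrict_of_subset sdiff_subset hk_in)
  calc ∫⁻ y in tᶜ, k y ∂μ = ∫⁻ y in tᶜ ∩ sᶜ, k y ∂μ + ∫⁻ y in s \ t, k y ∂μ := by
        rw [← compl_sdiff_compl, lintegral_inter_add_sdiff _ _ hs.compl]
    _ ≤ ∫⁻ y in sᶜ ∩ tᶜ, k y ∂μ + ∫⁻ y in t \ s, k y ∂μ := by
        rw [inter_comm]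
        exact add_le_add le_rfl (h_out.trans (hμ ▸ h_in))
    _ = ∫⁻ y in sᶜ, k y ∂μ := by
        rw [← compl_sdiff_compl, lintegral_inter_add_sdiff _ _ ht.compl]

end Rearrangement

theorem pow_smul_indicator_Ici_rpow_neg {n : ℕ} (hn : 1 ≤ n) {r : ℝ} (hr : 0 < r) (q : ℝ) :
    (fun y : ℝ => y ^ (n - 1) • (Ici r).indicator (fun t => t ^ (-q)) y) =
      (Ici r).indicator fun y => y ^ ((n : ℝ) - 1 - q) := by
  ext y
  by_cases hy : y ∈ Ici r
  · rw [indicator_of_mem hy, indicator_of_mem hy, smul_eq_mul, ← Real.rpow_natCast,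
      ← Real.rpow_add (hr.trans_le hy), Nat.cast_sub hn, Nat.cast_one, sub_eq_add_neg (_ - _)]
  · simp [hy]

theorem indicator_Ici_comp_norm {E : Type*} [SeminormedAddCommGroup E] (f : ℝ → ℝ) (r : ℝ)
    (z : E) : (Ici r).indicator f ‖z‖ = (ball (0 : E) r)ᶜ.indicator (fun z => f ‖z‖) z := by
  by_cases h : r ≤ ‖z‖ <;> simp [indicator, h]

section RadialIntegral

variable {E : Type*} [NormedAddCommGroup E] [NormedSpace ℝ E] [FiniteDimensional ℝ E]
  [MeasurableSpace E] [BorelSpace E] [Nontrivial E] (μ : Measure E) [μ.IsAddHaarMeasure]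
  {q r : ℝ}

local notation "dim" => Module.finrank ℝ

theorem integrableOn_compl_ball_norm_rpow_neg (hr : 0 < r) (hq : dim E < q) :
    IntegrableOn (fun z : E => ‖z‖ ^ (-q)) (ball 0 r)ᶜ μ := by
  rw [← integrable_indicator_iff measurableSet_ball.compl,
    ← funext (indicator_Ici_comp_norm (fun t => t ^ (-q)) r), integrable_fun_norm_addHaar μ,
    pow_smul_indicator_Ici_rpow_neg Module.finrank_pos hr, integrableOn_indicator_iff
      measurableSet_Ici, inter_eq_left.2 (Ici_subset_Ioi.2 hr),
    integrableOn_Ici_iff_integrableOn_Ioi]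
  exact integrableOn_Ioi_rpow_of_lt (by linarith) hr

theorem integral_compl_ball_norm_rpow_neg (hr : 0 < r) (hq : dim E < q) :
    ∫ z in (ball (0 : E) r)ᶜ, ‖z‖ ^ (-q) ∂μ =
      dim E * μ.real (ball 0 1) * (r ^ ((dim E : ℝ) - q) / (q - dim E)) := by
  rw [← integral_indicator measurableSet_ball.compl,
    ← funext (indicator_Ici_comp_norm (fun t => t ^ (-q)) r),
    integral_fun_norm_addHaar μ, pow_smul_indicator_Ici_rpow_neg Module.finrank_pos hr,
    setIntegral_indicator measurableSet_Ici, inter_eq_right.2 (Ici_subset_Ioi.2 hr),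
    integral_Ici_eq_integral_Ioi, integral_Ioi_rpow_of_lt (by linarith) hr, nsmul_eq_mul,
    smul_eq_mul, mul_assoc]
  congr 2
  rw [show (dim E : ℝ) - 1 - q + 1 = dim E - q by ring, neg_div, ← div_neg, neg_sub]

theorem lintegral_compl_ball_norm_sub_rpow_neg (x : E) (hr : 0 < r) (hq : dim E < q) :
    ∫⁻ y in (ball x r)ᶜ, ENNReal.ofReal (‖x - y‖ ^ (-q)) ∂μ =
      ENNReal.ofReal (dim E * μ.real (ball 0 1) * (r ^ ((dim E : ℝ) - q) / (q - dim E))) := by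
  have h_pre : (x - ·) ⁻¹' (ball (0 : E) r)ᶜ = (ball x r)ᶜ := by
    ext y
    simp [dist_eq_norm, norm_sub_rev x y]
  rw [← h_pre, (Measure.measurePreserving_sub_left μ x).setLIntegral_comp_preimage
      measurableSet_ball.compl (f := fun z => ENNReal.ofReal (‖z‖ ^ (-q))) (by fun_prop),
    ← integral_compl_ball_norm_rpow_neg μ hr hq, ofReal_integral_eq_lintegral_ofReal
      (integrableOn_compl_ball_norm_rpow_neg μ hr hq) (ae_of_all _ fun z => by positivity)]

theorem addHaar_ball_rpow_inv_finrank (x : E) {m : ℝ} (hm : 0 ≤ m) :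
    μ (ball x ((m / μ.real (ball 0 1)) ^ (dim E : ℝ)⁻¹)) = ENNReal.ofReal m := by
  have hc : 0 < μ.real (ball (0 : E) 1) :=
    ENNReal.toReal_pos (measure_ball_pos μ 0 one_pos).ne' measure_ball_lt_top.ne
  rw [μ.addHaar_ball x (by positivity), Real.rpow_inv_natCast_pow (by positivity)
      Module.finrank_pos.ne', ← ofReal_measureReal measure_ball_lt_top.ne, ← ENNReal.ofReal_mul
      (by positivity), div_mul_cancel₀ m hc.ne']

theorem lintegral_compl_ball_le_lintegral_compl_norm_sub_rpow_neg (x : E) {s : Set E}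
    (hs : MeasurableSet s) (hr : 0 < r) (hμ : μ s = μ (ball x r)) (hq : 0 ≤ q) :
    ∫⁻ y in (ball x r)ᶜ, ENNReal.ofReal (‖x - y‖ ^ (-q)) ∂μ ≤
      ∫⁻ y in sᶜ, ENNReal.ofReal (‖x - y‖ ^ (-q)) ∂μ := by
  refine setLIntegral_compl_le_of_measure_eq hs measurableSet_ball hμ measure_ball_lt_top.ne
    (c := ENNReal.ofReal (r ^ (-q))) ?_ fun y hy => ?_
  · filter_upwards [ae_restrict_mem measurableSet_ball,
      ae_restrict_of_ae (μ.ae_ne x)] with y hy hyx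
    rw [mem_ball', dist_eq_norm] at hy
    exact ENNReal.ofReal_le_ofReal <| Real.rpow_le_rpow_of_nonpos
      (norm_pos_iff.2 (sub_ne_zero.2 hyx.symm)) hy.le (neg_nonpos.2 hq)
  · rw [mem_ball', dist_eq_norm, not_lt] at hy
    exact ENNReal.ofReal_le_ofReal <| Real.rpow_le_rpow_of_nonpos hr hy (neg_nonpos.2 hq)

theorem ofReal_le_lintegral_compl_norm_sub_rpow_neg (x : E) {s : Set E} (hs : MeasurableSet s)
    (hs_fin : μ s ≠ ∞) (hq : dim E < q) :
    ENNReal.ofReal (dim E * μ.real (ball 0 1) ^ (q / dim E) *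
        μ.real s ^ (((dim E : ℝ) - q) / dim E) / (q - dim E)) ≤
      ∫⁻ y in sᶜ, ENNReal.ofReal (‖x - y‖ ^ (-q)) ∂μ := by
  have hn : (0 : ℝ) < dim E := by exact_mod_cast Module.finrank_pos
  have he : ((dim E : ℝ) - q) / dim E < 0 := div_neg_of_neg_of_pos (by linarith) hn
  set c := μ.real (ball (0 : E) 1)
  set m := μ.real s
  -- `0 ^ e = 0` for `e ≠ 0` in Lean, so for a null set `s` the left side vanishes.
  rcases eq_or_ne (μ s) 0 with hs0 | hs0
  · simp [m, measureReal_def, hs0, Real.zero_rpow he.ne]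
  have hc : 0 < c := ENNReal.toReal_pos (measure_ball_pos μ 0 one_pos).ne' measure_ball_lt_top.ne
  have hm : 0 < m := ENNReal.toReal_pos hs0 hs_fin
  set r := (m / c) ^ (dim E : ℝ)⁻¹
  have hr : 0 < r := by positivity
  have hvol : μ s = μ (ball x r) := by
    rw [addHaar_ball_rpow_inv_finrank μ x hm.le, ofReal_measureReal hs_fin]
  have hconst : dim E * c ^ (q / dim E) * m ^ (((dim E : ℝ) - q) / dim E) / (q - dim E) =
      dim E * c * (r ^ ((dim E : ℝ) - q) / (q - dim E)) := by
    rw [← Real.rpow_mul (by positivity), inv_mul_eq_div, Real.div_rpow hm.le hc.le,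
      show q / dim E = 1 - ((dim E : ℝ) - q) / dim E by field_simp; ring, Real.rpow_sub hc,
      Real.rpow_one]
    field_simp
  rw [hconst, ← lintegral_compl_ball_norm_sub_rpow_neg μ x hr hq]
  exact lintegral_compl_ball_le_lintegral_compl_norm_sub_rpow_neg μ x hs hr hvol (by linarith)

end RadialIntegral

theorem stmt_14_general {d : ℕ} (hd : 1 ≤ d) (s p : ℝ) (hs : s ∈ Set.Ioo (0 : ℝ) 1) (hp : 1 ≤ p)
    (E : Set (EuclideanSpace ℝ (Fin d))) (hE : MeasurableSet E)
    (hEfin : volume E < ⊤) (x : EuclideanSpace ℝ (Fin d)) :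
    ENNReal.ofReal ((d : ℝ) *
        (volume (Metric.ball (0 : EuclideanSpace ℝ (Fin d)) 1)).toReal ^ (1 + s * p / d) /
          (s * p) * (volume E).toReal ^ (-(s * p) / d)) ≤
      ∫⁻ y in Eᶜ, ENNReal.ofReal (‖x - y‖ ^ (-(d : ℝ) - s * p)) := by
  have hsp : 0 < s * p := mul_pos hs.1 (by linarith)
  have hd0 : (0 : ℝ) < d := by exact_mod_cast hd
  have : Nonempty (Fin d) := ⟨⟨0, hd⟩⟩
  have key := ofReal_le_lintegral_compl_norm_sub_rpow_neg volume x hE hEfin.ne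
    (q := d + s * p) (by simpa using hsp)
  rw [finrank_euclideanSpace_fin, add_sub_cancel_left, sub_add_cancel_left, neg_add',
    measureReal_def, measureReal_def] at key
  convert key using 2
  rw [show (1 : ℝ) + s * p / d = (d + s * p) / d by field_simp]
  ring

/-- for `s ∈ (0,1)`, `p ≥ 1` with `sp < d`, every measurable set `E` of finite
measure and every `x`, `∫_{E^c} |x−y|^{−d−sp} dy ≥ γ_s |E|^{−sp/d}` with
`γ_s = d c_d^{1+sp/d}/(sp)`. -/
theorem stmt_14 {d : ℕ} (hd : 1 ≤ d) (s p : ℝ) (hs : s ∈ Set.Ioo (0 : ℝ) 1) (hp : 1 ≤ p)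
    (hsp : s * p < d) (E : Set (EuclideanSpace ℝ (Fin d))) (hE : MeasurableSet E)
    (hEfin : volume E < ⊤) (x : EuclideanSpace ℝ (Fin d)) :
    ENNReal.ofReal ((d : ℝ) *
        (volume (Metric.ball (0 : EuclideanSpace ℝ (Fin d)) 1)).toReal ^ (1 + s * p / d) /
          (s * p) * (volume E).toReal ^ (-(s * p) / d)) ≤
      ∫⁻ y in Eᶜ, ENNReal.ofReal (‖x - y‖ ^ (-(d : ℝ) - s * p)) :=
  stmt_14_general hd s p hs hp E hE hEfin x
end
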